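/- arXiv:1102.1618 — 4 statements merged into one kernel-verified Lean document; each statement's English description precedes it below -/
import Mathlib

section
/- Let F_1,...,F_q ∈ M_n and W ∈ M_{n,k} with W†W = I_k. Suppose W† F_i† F_j W = ξ_{ij} I_k for all 1 ≤ i,j ≤ q, where ξ = [ξ_{ij}] ∈ M_q is positive definite. Let F = [F_1 F_2 ⋯ F_q] ∈ M_{n, qn} and define R_1 = F (I_q ⊗ W)(ξ^{-1/2} ⊗ I_k) ∈ M_{n, qk}. Then R_1† R_1 = I_{qk}; in particular qk ≤ n. -/
open Matrix Kronecker ComplexOrder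

/-
`M = F (I_q ⊗ W)` is the block row `[F_1 W ⋯ F_q W]`, so the `(i, j)` block of `Mᴴ M` is
`Wᴴ F_iᴴ F_j W = ξ_{ij} I_k`, i.e. `Mᴴ M = ξ ⊗ I_k`. The square root `S = U √D Uᴴ` of `ξ` is
Hermitian and invertible, so `(S⁻¹)ᴴ ξ S⁻¹ = S⁻¹ S S S⁻¹ = 1`, and the mixed product rule gives
`R₁ᴴ R₁ = ((S⁻¹)ᴴ ξ S⁻¹) ⊗ I_k = I_{qk}`. A matrix with a left inverse has rank equal to its
number of columns, whence `qk ≤ n`.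
-/

namespace Matrix

variable {R : Type*} {m n p r ι κ : Type*}

def blockRow (F : ι → Matrix m n R) : Matrix m (ι × n) R :=
  of fun a x => F x.1 a x.2

@[simp]
theorem blockRow_apply (F : ι → Matrix m n R) (a : m) (x : ι × n) :
    blockRow F a x = F x.1 a x.2 :=
  rfl

theorem blockRow_mul_one_kronecker [CommSemiring R] [Fintype n] [Fintype ι] [DecidableEq ι]
    (F : ι → Matrix m n R) (W : Matrix n p R) :
    blockRow F * ((1 : Matrix ι ι R) ⊗ₖ W) = blockRow fun i => F i * W := by
  ext a ⟨i, c⟩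
  simp [mul_apply, Fintype.sum_prod_type, one_apply]

theorem conjTranspose_blockRow_mul_blockRow [Fintype m] [NonUnitalSemiring R] [Star R]
    (G : ι → Matrix m p R) (H : κ → Matrix m r R) :
    (blockRow G)ᴴ * blockRow H = of fun x y => ((G x.1)ᴴ * H y.1) x.2 y.2 := by
  ext x y
  simp [mul_apply]

theorem conjTranspose_mul_self_mul_kronecker_one [CommSemiring R] [StarRing R]
    [Fintype m] [Fintype ι] [Fintype κ] [Fintype p] [DecidableEq κ] [DecidableEq p]
    {M : Matrix m (ι × p) R} {A : Matrix ι ι R} {T : Matrix ι κ R}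
    (hM : Mᴴ * M = A ⊗ₖ (1 : Matrix p p R)) (hT : Tᴴ * A * T = 1) :
    (M * (T ⊗ₖ (1 : Matrix p p R)))ᴴ * (M * (T ⊗ₖ (1 : Matrix p p R))) = 1 :=
  calc (M * (T ⊗ₖ (1 : Matrix p p R)))ᴴ * (M * (T ⊗ₖ (1 : Matrix p p R)))
      = (Tᴴ ⊗ₖ (1 : Matrix p p R)) * (Mᴴ * M) * (T ⊗ₖ (1 : Matrix p p R)) := by
        rw [conjTranspose_mul, conjTranspose_kronecker, conjTranspose_one]
        simp only [Matrix.mul_assoc]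
    _ = (Tᴴ * A * T) ⊗ₖ (1 : Matrix p p R) := by
        rw [hM, ← mul_kronecker_mul, ← mul_kronecker_mul, Matrix.one_mul, Matrix.one_mul]
    _ = 1 := by rw [hT, one_kronecker_one]

theorem card_le_card_of_mul_eq_one [CommSemiring R] [StrongRankCondition R] [Fintype m]
    [Fintype n] [DecidableEq n] {A : Matrix m n R} {B : Matrix n m R} (h : B * A = 1) :
    Fintype.card n ≤ Fintype.card m :=
  calc Fintype.card n = (B * A).rank := by rw [h, rank_one]
    _ ≤ A.rank := rank_mul_le_right B A
    _ ≤ Fintype.card m := rank_le_card_height A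

section SpectralSqrt

variable {𝕜 : Type*} [RCLike 𝕜] [Fintype n] [DecidableEq n] {A : Matrix n n 𝕜}

noncomputable def IsHermitian.spectralSqrt (hA : A.IsHermitian) : Matrix n n 𝕜 :=
  (hA.eigenvectorUnitary : Matrix n n 𝕜) * diagonal (RCLike.ofReal ∘ Real.sqrt ∘ hA.eigenvalues) *
    (star hA.eigenvectorUnitary : Matrix n n 𝕜)

theorem IsHermitian.conjTranspose_spectralSqrt (hA : A.IsHermitian) :
    hA.spectralSqrtᴴ = hA.spectralSqrt := by
  simp only [spectralSqrt, conjTranspose_mul, diagonal_conjTranspose, star_eq_conjTranspose,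
    conjTranspose_conjTranspose, Matrix.mul_assoc]
  congr 3
  funext i
  simp

theorem PosSemidef.spectralSqrt_mul_self (hA : A.PosSemidef) :
    hA.1.spectralSqrt * hA.1.spectralSqrt = A := by
  have hsqrt : diagonal (RCLike.ofReal ∘ Real.sqrt ∘ hA.1.eigenvalues) *
      diagonal (RCLike.ofReal ∘ Real.sqrt ∘ hA.1.eigenvalues) =
      diagonal (RCLike.ofReal ∘ hA.1.eigenvalues : n → 𝕜) := by
    rw [diagonal_mul_diagonal]
    congr 1
    funext i
    simp only [Function.comp_apply, ← RCLike.ofReal_mul,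
      Real.mul_self_sqrt (hA.eigenvalues_nonneg i)]
  conv_rhs => rw [hA.1.spectral_theorem, Unitary.conjStarAlgAut_apply]
  simp only [IsHermitian.spectralSqrt, Matrix.mul_assoc,
    ← Matrix.mul_assoc (star _ : Matrix n n 𝕜), Unitary.coe_star_mul_self, Matrix.one_mul]
  rw [← Matrix.mul_assoc _ _ (star _ : Matrix n n 𝕜), hsqrt]

theorem PosDef.conjTranspose_inv_spectralSqrt_mul_mul (hA : A.PosDef) :
    (hA.1.spectralSqrt⁻¹)ᴴ * A * hA.1.spectralSqrt⁻¹ = 1 := by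
  have hS := hA.posSemidef.spectralSqrt_mul_self
  have hunit : IsUnit hA.1.spectralSqrt.det :=
    (isUnit_iff_isUnit_det _).mp (isUnit_of_mul_isUnit_left (hS ▸ hA.isUnit))
  calc (hA.1.spectralSqrt⁻¹)ᴴ * A * hA.1.spectralSqrt⁻¹
      = hA.1.spectralSqrt⁻¹ * (hA.1.spectralSqrt * hA.1.spectralSqrt) * hA.1.spectralSqrt⁻¹ := by
        rw [hS, conjTranspose_nonsing_inv, hA.1.conjTranspose_spectralSqrt]
    _ = 1 := by
        rw [← Matrix.mul_assoc, nonsing_inv_mul _ hunit, Matrix.one_mul, mul_nonsing_inv _ hunit]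

end SpectralSqrt

end Matrix

theorem R1_isometry_general (n k q : ℕ)
    (F : Fin q → Matrix (Fin n) (Fin n) ℂ)
    (W : Matrix (Fin n) (Fin k) ℂ)
    (ξ : Matrix (Fin q) (Fin q) ℂ) (hξ : ξ.PosDef)
    (hcomp : ∀ i j, Wᴴ * (F i)ᴴ * F j * W = ξ i j • (1 : Matrix (Fin k) (Fin k) ℂ))
    (Fmat : Matrix (Fin n) (Fin q × Fin n) ℂ)
    (hFmat : ∀ (a : Fin n) (p : Fin q × Fin n), Fmat a p = F p.1 a p.2)
    (R₁ : Matrix (Fin n) (Fin q × Fin k) ℂ)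
    (hR₁ : R₁ = Fmat * ((1 : Matrix (Fin q) (Fin q) ℂ) ⊗ₖ W) *
        (((hξ.posSemidef.1.eigenvectorUnitary : Matrix (Fin q) (Fin q) ℂ) * diagonal (((↑) : ℝ → ℂ) ∘ (√·) ∘ hξ.posSemidef.1.eigenvalues) *
          (star hξ.posSemidef.1.eigenvectorUnitary : Matrix (Fin q) (Fin q) ℂ))⁻¹ ⊗ₖ (1 : Matrix (Fin k) (Fin k) ℂ))) :
    R₁ᴴ * R₁ = 1 ∧ q * k ≤ n := by
  have hFmat' : Fmat = blockRow F := Matrix.ext hFmat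
  have hM : (Fmat * ((1 : Matrix (Fin q) (Fin q) ℂ) ⊗ₖ W))ᴴ *
      (Fmat * ((1 : Matrix (Fin q) (Fin q) ℂ) ⊗ₖ W)) = ξ ⊗ₖ 1 := by
    rw [hFmat', blockRow_mul_one_kronecker, conjTranspose_blockRow_mul_blockRow]
    ext ⟨i, c⟩ ⟨j, d⟩
    simp [conjTranspose_mul, ← Matrix.mul_assoc, hcomp]
  have hR : R₁ᴴ * R₁ = 1 :=
    hR₁ ▸ conjTranspose_mul_self_mul_kronecker_one hM hξ.conjTranspose_inv_spectralSqrt_mul_mul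
  exact ⟨hR, by simpa using card_le_card_of_mul_eq_one hR⟩

/-- If `Wᴴ Fᵢᴴ Fⱼ W = ξᵢⱼ I_k` with `ξ` positive definite, then
`R₁ = F (I_q ⊗ W)(ξ^{-1/2} ⊗ I_k)` satisfies `R₁ᴴ R₁ = I_{qk}`; in particular `qk ≤ n`. -/
theorem R1_isometry (n k q : ℕ)
    (F : Fin q → Matrix (Fin n) (Fin n) ℂ)
    (W : Matrix (Fin n) (Fin k) ℂ) (hW : Wᴴ * W = 1)
    (ξ : Matrix (Fin q) (Fin q) ℂ) (hξ : ξ.PosDef)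
    (hcomp : ∀ i j, Wᴴ * (F i)ᴴ * F j * W = ξ i j • (1 : Matrix (Fin k) (Fin k) ℂ))
    (Fmat : Matrix (Fin n) (Fin q × Fin n) ℂ)
    (hFmat : ∀ (a : Fin n) (p : Fin q × Fin n), Fmat a p = F p.1 a p.2)
    (R₁ : Matrix (Fin n) (Fin q × Fin k) ℂ)
    (hR₁ : R₁ = Fmat * ((1 : Matrix (Fin q) (Fin q) ℂ) ⊗ₖ W) *
        (((hξ.posSemidef.1.eigenvectorUnitary : Matrix (Fin q) (Fin q) ℂ) * diagonal (((↑) : ℝ → ℂ) ∘ (√·) ∘ hξ.posSemidef.1.eigenvalues) *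
          (star hξ.posSemidef.1.eigenvectorUnitary : Matrix (Fin q) (Fin q) ℂ))⁻¹ ⊗ₖ (1 : Matrix (Fin k) (Fin k) ℂ))) :
    R₁ᴴ * R₁ = 1 ∧ q * k ≤ n :=
  R1_isometry_general n k q F W ξ hξ hcomp Fmat hFmat R₁ hR₁
end

section
/- Suppose k divides n and identify M_n ≅ M_{n/k} ⊗ M_k. Under the hypotheses of the main theorem, the map Ψ : M_n → M_n defined by Ψ(ρ') = W (tr_1(R† ρ' R)) W† satisfies Ψ(Φ(ρ)) = (tr ξ) ρ for every ρ of the form ρ = W ρ̃ W† with ρ̃ ∈ M_k a density matrix; in particular, if Φ is trace preserving then Ψ ∘ Φ(ρ) = ρ. -/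
open Matrix Kronecker ComplexOrder

/-!
Taking the partial trace of `(ξ ⊕ 0) ⊗ ρ̃` over the first factor leaves `(tr ξ) ρ̃`, so
`Ψ (Φ ρ) = (tr ξ) W ρ̃ Wᴴ`. If `Φ` is trace preserving, taking traces in
`Rᴴ Φ(W ρ̃ Wᴴ) R = (ξ ⊕ 0) ⊗ ρ̃`, with `R` unitary and `W` an isometry, gives `tr ξ = 1`.
-/

namespace Matrix

variable {α ι m n : Type*} [Fintype m]

theorem trace_submatrix_equiv [Fintype n] [AddCommMonoid α] (A : Matrix m m α) (e : n ≃ m) :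
    (A.submatrix e e).trace = A.trace :=
  e.sum_comp fun i => A i i

theorem trace_fromBlocks [Fintype n] [AddCommMonoid α] (A : Matrix m m α) (B : Matrix m n α)
    (C : Matrix n m α) (D : Matrix n n α) :
    (fromBlocks A B C D).trace = A.trace + D.trace :=
  Fintype.sum_sum_type _

/-- The partial trace `tr₁` over the first tensor factor. -/
def traceLeft [AddCommMonoid α] (A : Matrix (m × n) (m × n) α) : Matrix n n α :=
  of fun a b => ∑ i, A (i, a) (i, b)

theorem traceLeft_kronecker [CommSemiring α] (A : Matrix m m α) (B : Matrix n n α) :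
    traceLeft (A ⊗ₖ B) = A.trace • B := by
  ext a b
  simp only [traceLeft, of_apply, kroneckerMap_apply, smul_apply, smul_eq_mul, trace, diag,
    Finset.sum_mul]

theorem trace_sum_mul_mul_conjTranspose [Fintype ι] [Fintype n] [DecidableEq n] [CommSemiring α]
    [StarRing α] {F : ι → Matrix m n α} (hF : ∑ j, (F j)ᴴ * F j = 1) (X : Matrix n n α) :
    (∑ j, F j * X * (F j)ᴴ).trace = X.trace := by
  calc (∑ j, F j * X * (F j)ᴴ).trace = ∑ j, ((F j)ᴴ * F j * X).trace := by
        rw [trace_sum]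
        exact Finset.sum_congr rfl fun j _ => trace_mul_cycle _ _ _
    _ = X.trace := by rw [← trace_sum, ← Finset.sum_mul, hF, Matrix.one_mul]

theorem trace_mul_mul_conjTranspose [Fintype n] [DecidableEq n] [CommSemiring α] [StarRing α]
    {A : Matrix m n α} (hA : Aᴴ * A = 1) (X : Matrix n n α) : (A * X * Aᴴ).trace = X.trace := by
  rw [trace_mul_cycle, hA, Matrix.one_mul]

end Matrix

theorem recovery_channel_general (m k r q : ℕ) (hq : q ≤ m)
    (F : Fin r → Matrix (Fin m × Fin k) (Fin m × Fin k) ℂ)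
    (W : Matrix (Fin m × Fin k) (Fin k) ℂ) (hW : Wᴴ * W = 1)
    (R : Matrix (Fin m × Fin k) (Fin m × Fin k) ℂ)
    (hR : R ∈ Matrix.unitaryGroup (Fin m × Fin k) ℂ)
    (ξ : Matrix (Fin q) (Fin q) ℂ)
    (ξ' : Matrix (Fin m) (Fin m) ℂ)
    (hξ' : ξ' = (Matrix.fromBlocks ξ 0 0 (0 : Matrix (Fin (m - q)) (Fin (m - q)) ℂ)).submatrix
        (finSumFinEquiv.trans (finCongr (Nat.add_sub_cancel' hq))).symm
        (finSumFinEquiv.trans (finCongr (Nat.add_sub_cancel' hq))).symm)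
    (hmain : ∀ ρtil : Matrix (Fin k) (Fin k) ℂ, ρtil.PosSemidef → ρtil.trace = 1 →
      Rᴴ * (∑ j, F j * (W * ρtil * Wᴴ) * (F j)ᴴ) * R = ξ' ⊗ₖ ρtil)
    (tr₁ : Matrix (Fin m × Fin k) (Fin m × Fin k) ℂ → Matrix (Fin k) (Fin k) ℂ)
    (htr₁ : ∀ A, tr₁ A = Matrix.of fun a b => ∑ i, A (i, a) (i, b))
    (Ψ : Matrix (Fin m × Fin k) (Fin m × Fin k) ℂ → Matrix (Fin m × Fin k) (Fin m × Fin k) ℂ)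
    (hΨ : ∀ ρ', Ψ ρ' = W * tr₁ (Rᴴ * ρ' * R) * Wᴴ) :
    ∀ ρtil : Matrix (Fin k) (Fin k) ℂ, ρtil.PosSemidef → ρtil.trace = 1 →
      Ψ (∑ j, F j * (W * ρtil * Wᴴ) * (F j)ᴴ) = ξ.trace • (W * ρtil * Wᴴ) ∧
      ((∑ j, (F j)ᴴ * F j = 1) →
        Ψ (∑ j, F j * (W * ρtil * Wᴴ) * (F j)ᴴ) = W * ρtil * Wᴴ) := by
  intro ρtil hρ hρ_trace
  have hΦ := hmain ρtil hρ hρ_trace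
  have htr₁_eq : tr₁ = traceLeft := funext htr₁
  have hξ'_trace : ξ'.trace = ξ.trace := by
    rw [hξ', trace_submatrix_equiv, trace_fromBlocks, trace_zero, add_zero]
  have hrecover : Ψ (∑ j, F j * (W * ρtil * Wᴴ) * (F j)ᴴ) = ξ.trace • (W * ρtil * Wᴴ) := by
    rw [hΨ, hΦ, htr₁_eq, traceLeft_kronecker, hξ'_trace, Matrix.mul_smul, Matrix.smul_mul]
  refine ⟨hrecover, fun hTP => ?_⟩
  have hR_unitary : R * Rᴴ = 1 := hR.2
  have hξ_trace : ξ.trace = 1 :=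
    calc ξ.trace = (ξ' ⊗ₖ ρtil).trace := by rw [trace_kronecker, hρ_trace, mul_one, hξ'_trace]
      _ = 1 := by
        rw [← hΦ, trace_mul_cycle, hR_unitary, Matrix.one_mul,
          trace_sum_mul_mul_conjTranspose hTP, trace_mul_mul_conjTranspose hW, hρ_trace]
  rw [hrecover, hξ_trace, one_smul]

/-- Suppose `k ∣ n`, `n = m k`, and identify `M_n ≅ M_m ⊗ M_k` (indices
`Fin m × Fin k`).  Under the hypotheses of the main theorem (here: `R` unitary, `ξ`
positive definite with `Rᴴ Φ(W ρ̃ Wᴴ) R = (ξ ⊕ 0) ⊗ ρ̃`), the recovery map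
`Ψ(ρ') = W (tr₁(Rᴴ ρ' R)) Wᴴ` satisfies `Ψ(Φ(ρ)) = (tr ξ) ρ` for every encoded density
matrix `ρ = W ρ̃ Wᴴ`; in particular `Ψ(Φ(ρ)) = ρ` if `Φ` is trace preserving. -/
theorem recovery_channel (m k r q : ℕ) (hk : 1 ≤ k) (hq : q ≤ m)
    (F : Fin r → Matrix (Fin m × Fin k) (Fin m × Fin k) ℂ)
    (W : Matrix (Fin m × Fin k) (Fin k) ℂ) (hW : Wᴴ * W = 1)
    (R : Matrix (Fin m × Fin k) (Fin m × Fin k) ℂ)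
    (hR : R ∈ Matrix.unitaryGroup (Fin m × Fin k) ℂ)
    (ξ : Matrix (Fin q) (Fin q) ℂ) (hξ : ξ.PosDef)
    (ξ' : Matrix (Fin m) (Fin m) ℂ)
    (hξ' : ξ' = (Matrix.fromBlocks ξ 0 0 (0 : Matrix (Fin (m - q)) (Fin (m - q)) ℂ)).submatrix
        (finSumFinEquiv.trans (finCongr (Nat.add_sub_cancel' hq))).symm
        (finSumFinEquiv.trans (finCongr (Nat.add_sub_cancel' hq))).symm)
    (hmain : ∀ ρtil : Matrix (Fin k) (Fin k) ℂ, ρtil.PosSemidef → ρtil.trace = 1 →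
      Rᴴ * (∑ j, F j * (W * ρtil * Wᴴ) * (F j)ᴴ) * R = ξ' ⊗ₖ ρtil)
    (tr₁ : Matrix (Fin m × Fin k) (Fin m × Fin k) ℂ → Matrix (Fin k) (Fin k) ℂ)
    (htr₁ : ∀ A, tr₁ A = Matrix.of fun a b => ∑ i, A (i, a) (i, b))
    (Ψ : Matrix (Fin m × Fin k) (Fin m × Fin k) ℂ → Matrix (Fin m × Fin k) (Fin m × Fin k) ℂ)
    (hΨ : ∀ ρ', Ψ ρ' = W * tr₁ (Rᴴ * ρ' * R) * Wᴴ) :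
    ∀ ρtil : Matrix (Fin k) (Fin k) ℂ, ρtil.PosSemidef → ρtil.trace = 1 →
      Ψ (∑ j, F j * (W * ρtil * Wᴴ) * (F j)ᴴ) = ξ.trace • (W * ρtil * Wᴴ) ∧
      ((∑ j, (F j)ᴴ * F j = 1) →
        Ψ (∑ j, F j * (W * ρtil * Wᴴ) * (F j)ᴴ) = W * ρtil * Wᴴ) :=
  recovery_channel_general m k r q hq F W hW R hR ξ ξ' hξ' hmain tr₁ htr₁ Ψ hΨ
end

section
/- Let Φ(ρ) = Σ_{j=1}^r F_j ρ F_j† satisfy the hypotheses of the main theorem with unitary R and positive definite ξ ∈ M_q. Let Φ̃(ρ) = Σ_{j=1}^s F̃_j ρ F̃_j† where each F̃_j is a linear combination of F_1,...,F_r. Then there is a positive semidefinite matrix ξ̃ ∈ M_q such that for every density matrix ρ̃ ∈ M_k, R† Φ̃(W ρ̃ W†) R = (ξ̃ ⊗ ρ̃) ⊕ 0_{n-qk}. Moreover ξ̃ = ξ^{1/2} T T† ξ^{1/2} where T ∈ M_q is formed from the coefficients of the linear combinations restricted to F_1,...,F_q. -/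
open Matrix Kronecker ComplexOrder

/-- The positive semidefinite square root of a positive semidefinite matrix
(the definition Mathlib had, since removed). -/
noncomputable def Matrix.PosSemidef.sqrt {n 𝕜 : Type*} [Fintype n] [DecidableEq n] [RCLike 𝕜]
    {A : Matrix n n 𝕜} (hA : A.PosSemidef) : Matrix n n 𝕜 :=
  (hA.1.eigenvectorUnitary : Matrix n n 𝕜) *
    diagonal (fun i => ((Real.sqrt (hA.1.eigenvalues i) : ℝ) : 𝕜)) *
    (star hA.1.eigenvectorUnitary : Matrix n n 𝕜)

/-!
Every `F̃ⱼ W` is a combination of the `Fᵢ W` with `i ≤ q`, since the others vanish; in block form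
`F̃ⱼ W = F (I_q ⊗ W) (Tⱼ ⊗ I_k)`, where `Tⱼ` is the `j`-th column of `T`. The defining identity of
`R` turns `Rᴴ F̃ⱼ W` into `[(ξ^{1/2} ⊗ I_k); 0] (Tⱼ ⊗ I_k)`, and summing over `j` uses
`∑ⱼ (Tⱼ ⊗ I) ρ (Tⱼ ⊗ I)ᴴ = T Tᴴ ⊗ ρ`.
-/

theorem Fin.sum_univ_eq_sum_castLE {M : Type*} [AddCommMonoid M] {q r : ℕ} (h : q ≤ r)
    (f : Fin r → M) (hf : ∀ j : Fin r, q ≤ (j : ℕ) → f j = 0) :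
    ∑ j, f j = ∑ i : Fin q, f (Fin.castLE h i) := by
  calc ∑ j, f j = ∑ j ∈ Finset.univ.map (Fin.castLEEmb h), f j := by
        refine (Finset.sum_subset (Finset.subset_univ _) fun j _ hj => hf j ?_).symm
        by_contra hjq
        exact hj (Finset.mem_map.mpr ⟨⟨j, by omega⟩, Finset.mem_univ _, rfl⟩)
    _ = ∑ i : Fin q, f (Fin.castLE h i) := Finset.sum_map _ _ _

namespace Matrix

variable {ι σ l m n p : Type*} {α : Type*}

def hconcat (F : ι → Matrix m n α) : Matrix m (ι × n) α :=
  of fun a x => F x.1 a x.2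

/-- The block column `v ⊗ Iₙ`, with `v` read as a column vector. -/
def vecKroneckerOne (n : Type*) [Zero α] [One α] [Mul α] [DecidableEq n] (v : ι → α) :
    Matrix (ι × n) n α :=
  of fun x c => v x.1 * (1 : Matrix n n α) x.2 c

theorem hconcat_mul_one_kronecker [Fintype ι] [DecidableEq ι] [Fintype n] [Semiring α]
    (F : ι → Matrix m n α) (W : Matrix n p α) :
    hconcat F * ((1 : Matrix ι ι α) ⊗ₖ W) = hconcat fun i => F i * W := by
  ext a ⟨i, c⟩
  simp [hconcat, mul_apply, Fintype.sum_prod_type, one_apply]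

theorem hconcat_mul_vecKroneckerOne [Fintype ι] [Fintype n] [DecidableEq n] [CommSemiring α]
    (G : ι → Matrix m n α) (v : ι → α) :
    hconcat G * vecKroneckerOne n v = ∑ i, v i • G i := by
  ext a c
  rw [mul_apply, Fintype.sum_prod_type]
  simp only [hconcat, vecKroneckerOne, of_apply, one_apply, mul_ite, mul_one, mul_zero,
    Finset.sum_ite_eq', Finset.mem_univ, if_true, sum_apply, smul_apply, smul_eq_mul, mul_comm]

theorem sum_vecKroneckerOne_mul_mul_conjTranspose [Fintype σ] [Fintype n] [DecidableEq n]
    [CommSemiring α] [StarRing α] (T : Matrix ι σ α) (ρ : Matrix n n α) :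
    ∑ j, vecKroneckerOne n (T · j) * ρ * (vecKroneckerOne n (T · j))ᴴ =
      (T * Tᴴ) ⊗ₖ ρ := by
  ext ⟨i, b⟩ ⟨i', b'⟩
  simp only [sum_apply, mul_apply, conjTranspose_apply, vecKroneckerOne, of_apply,
    kroneckerMap_apply, one_apply, mul_ite, mul_one, mul_zero, ite_mul, zero_mul, apply_ite star,
    star_zero, Finset.sum_ite_eq, Finset.mem_univ, if_true, Finset.sum_mul]
  exact Finset.sum_congr rfl fun j _ => by ring

theorem conjTranspose_mul_sum_mul_conjTranspose_mul [Fintype σ] [Fintype m] [Fintype n]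
    [Fintype p] [Fintype l] [Semiring α] [StarRing α] {U : Matrix m p α} {A : σ → Matrix m n α}
    {M : Matrix p l α} {C : σ → Matrix l n α} (h : ∀ j, Uᴴ * A j = M * C j) (X : Matrix n n α) :
    Uᴴ * (∑ j, A j * X * (A j)ᴴ) * U = M * (∑ j, C j * X * (C j)ᴴ) * Mᴴ := by
  simp only [Matrix.mul_sum, Matrix.sum_mul]
  refine Finset.sum_congr rfl fun j _ => ?_
  calc Uᴴ * (A j * X * (A j)ᴴ) * U = (Uᴴ * A j) * X * (Uᴴ * A j)ᴴ := by
        simp only [conjTranspose_mul, conjTranspose_conjTranspose, Matrix.mul_assoc]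
    _ = M * (C j * X * (C j)ᴴ) * Mᴴ := by
        simp only [h, conjTranspose_mul, Matrix.mul_assoc]

theorem submatrix_id_mul_mul_conjTranspose [Fintype n] [Semiring α] [StarRing α]
    (A : Matrix m n α) (X : Matrix n n α) (g : l → m) :
    A.submatrix g id * X * (A.submatrix g id)ᴴ = (A * X * Aᴴ).submatrix g g := by
  rw [submatrix_mul _ _ g id g Function.bijective_id, submatrix_mul _ _ g id id
    Function.bijective_id, conjTranspose_submatrix]
  rfl

theorem fromRows_zero_mul_mul_conjTranspose [Fintype n] [Semiring α] [StarRing α]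
    (A : Matrix m n α) (X : Matrix n n α) :
    fromRows A (0 : Matrix l n α) * X * (fromRows A 0)ᴴ =
      fromBlocks (A * X * Aᴴ) 0 0 (0 : Matrix l l α) := by
  rw [conjTranspose_fromRows_eq_fromCols_conjTranspose, fromRows_mul, Matrix.zero_mul,
    fromRows_mul_fromCols]
  simp

theorem kronecker_one_mul_kronecker_mul_conjTranspose [Fintype m] [Fintype n] [DecidableEq n]
    [CommSemiring α] [StarRing α] (S : Matrix l m α) (X : Matrix m m α) (ρ : Matrix n n α) :
    (S ⊗ₖ (1 : Matrix n n α)) * (X ⊗ₖ ρ) * (S ⊗ₖ (1 : Matrix n n α))ᴴ = (S * X * Sᴴ) ⊗ₖ ρ := by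
  rw [conjTranspose_kronecker, conjTranspose_one, ← mul_kronecker_mul, ← mul_kronecker_mul,
    Matrix.one_mul, Matrix.mul_one]

theorem PosSemidef.posSemidef_sqrt {𝕜 : Type*} [Fintype n] [DecidableEq n] [RCLike 𝕜]
    {A : Matrix n n 𝕜} (hA : A.PosSemidef) : hA.sqrt.PosSemidef := by
  have hd : (diagonal fun i => ((Real.sqrt (hA.1.eigenvalues i) : ℝ) : 𝕜)).PosSemidef :=
    PosSemidef.diagonal fun _ => by simp
  simpa [PosSemidef.sqrt, star_eq_conjTranspose] using
    hd.mul_mul_conjTranspose_same (hA.1.eigenvectorUnitary : Matrix n n 𝕜)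

end Matrix

theorem same_recovery_for_linear_combinations_general (n k r s q : ℕ) (hqr : q ≤ r)
    (hqk : q * k ≤ n)
    (F : Fin r → Matrix (Fin n) (Fin n) ℂ)
    (W : Matrix (Fin n) (Fin k) ℂ)
    (ξ : Matrix (Fin q) (Fin q) ℂ) (hξ : ξ.PosDef)
    (hFW : ∀ j : Fin r, q ≤ (j : ℕ) → F j * W = 0)
    (Fmat : Matrix (Fin n) (Fin q × Fin n) ℂ)
    (hFmat : ∀ (a : Fin n) (p : Fin q × Fin n), Fmat a p = F (Fin.castLE hqr p.1) a p.2)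
    (R : Matrix (Fin n) (Fin n) ℂ)
    (hR : Rᴴ * Fmat * ((1 : Matrix (Fin q) (Fin q) ℂ) ⊗ₖ W) =
      (Matrix.fromRows (hξ.posSemidef.sqrt ⊗ₖ (1 : Matrix (Fin k) (Fin k) ℂ))
          (0 : Matrix (Fin (n - q * k)) (Fin q × Fin k) ℂ)).submatrix
        (((Equiv.sumCongr finProdFinEquiv (Equiv.refl (Fin (n - q * k)))).trans
          (finSumFinEquiv.trans (finCongr (Nat.add_sub_cancel' hqk)))).symm) id)
    (t : Fin r → Fin s → ℂ)
    (Ftil : Fin s → Matrix (Fin n) (Fin n) ℂ)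
    (hFtil : ∀ j, Ftil j = ∑ i, t i j • F i)
    (T : Matrix (Fin q) (Fin s) ℂ) (hT : ∀ i j, T i j = t (Fin.castLE hqr i) j)
    (ξtil : Matrix (Fin q) (Fin q) ℂ)
    (hξtil : ξtil = hξ.posSemidef.sqrt * (T * Tᴴ) * hξ.posSemidef.sqrt) :
    ξtil.PosSemidef ∧
    ∀ ρtil : Matrix (Fin k) (Fin k) ℂ, ρtil.PosSemidef → ρtil.trace = 1 →
      Rᴴ * (∑ j, Ftil j * (W * ρtil * Wᴴ) * (Ftil j)ᴴ) * R =
        (Matrix.fromBlocks (ξtil ⊗ₖ ρtil) 0 0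
            (0 : Matrix (Fin (n - q * k)) (Fin (n - q * k)) ℂ)).submatrix
          (((Equiv.sumCongr finProdFinEquiv (Equiv.refl (Fin (n - q * k)))).trans
            (finSumFinEquiv.trans (finCongr (Nat.add_sub_cancel' hqk)))).symm)
          (((Equiv.sumCongr finProdFinEquiv (Equiv.refl (Fin (n - q * k)))).trans
            (finSumFinEquiv.trans (finCongr (Nat.add_sub_cancel' hqk)))).symm) := by
  set S := hξ.posSemidef.sqrt
  have hS : Sᴴ = S := hξ.posSemidef.posSemidef_sqrt.isHermitian.eq
  have hξtil' : ξtil = S * (T * Tᴴ) * Sᴴ := hS.symm ▸ hξtil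
  refine ⟨hξtil' ▸ (posSemidef_self_mul_conjTranspose T).mul_mul_conjTranspose_same S,
    fun ρ _ _ => ?_⟩
  have hFmat' : Fmat = hconcat fun i => F (Fin.castLE hqr i) := ext hFmat
  set M := (fromRows (S ⊗ₖ (1 : Matrix (Fin k) (Fin k) ℂ))
    (0 : Matrix (Fin (n - q * k)) (Fin q × Fin k) ℂ)).submatrix
    (((Equiv.sumCongr finProdFinEquiv (Equiv.refl (Fin (n - q * k)))).trans
      (finSumFinEquiv.trans (finCongr (Nat.add_sub_cancel' hqk)))).symm) id
  have hFtilW : ∀ j, Rᴴ * (Ftil j * W) = M * vecKroneckerOne (Fin k) (T · j) := fun j => by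
    have hcomb : Ftil j * W = Fmat * ((1 : Matrix (Fin q) (Fin q) ℂ) ⊗ₖ W) *
        vecKroneckerOne (Fin k) (T · j) := by
      rw [hFmat', hconcat_mul_one_kronecker, hconcat_mul_vecKroneckerOne, hFtil, Matrix.sum_mul,
        Fin.sum_univ_eq_sum_castLE hqr]
      · simp only [hT, Matrix.smul_mul]
      · intro i hi
        rw [Matrix.smul_mul, hFW i hi, smul_zero]
    rw [hcomb, ← hR]
    simp only [Matrix.mul_assoc]
  calc Rᴴ * (∑ j, Ftil j * (W * ρ * Wᴴ) * (Ftil j)ᴴ) * R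
      = Rᴴ * (∑ j, (Ftil j * W) * ρ * (Ftil j * W)ᴴ) * R := by
        simp only [conjTranspose_mul, Matrix.mul_assoc]
    _ = _ := by
        rw [conjTranspose_mul_sum_mul_conjTranspose_mul hFtilW,
          sum_vecKroneckerOne_mul_mul_conjTranspose, submatrix_id_mul_mul_conjTranspose,
          fromRows_zero_mul_mul_conjTranspose, kronecker_one_mul_kronecker_mul_conjTranspose,
          ← hξtil']

/-- Theorem 3: In the setting of the main theorem (isometry `W`,
`P F_iᴴ F_j P = ξ_{ij} P` for `i, j ≤ q` with `ξ` positive definite, `F_j W = 0` for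
`j > q`, and constructed unitary `R` with `Rᴴ F (I_q ⊗ W) = [(ξ^{1/2} ⊗ I_k); 0]`),
if `Φ̃(ρ) = ∑ⱼ F̃ⱼ ρ F̃ⱼᴴ` where each `F̃ⱼ = ∑ᵢ tᵢⱼ Fᵢ`, then with
`ξ̃ = ξ^{1/2} T Tᴴ ξ^{1/2}` (where `T` is formed from the coefficients restricted to
`F₁, …, F_q`) we have `Rᴴ Φ̃(W ρ̃ Wᴴ) R = (ξ̃ ⊗ ρ̃) ⊕ 0` for every density matrix `ρ̃`,
and `ξ̃` is positive semidefinite. -/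
theorem same_recovery_for_linear_combinations (n k r s q : ℕ) (hqr : q ≤ r)
    (hqk : q * k ≤ n)
    (F : Fin r → Matrix (Fin n) (Fin n) ℂ)
    (W : Matrix (Fin n) (Fin k) ℂ) (hW : Wᴴ * W = 1)
    (ξ : Matrix (Fin q) (Fin q) ℂ) (hξ : ξ.PosDef)
    (hKL : ∀ i j : Fin q,
      (W * Wᴴ) * (F (Fin.castLE hqr i))ᴴ * F (Fin.castLE hqr j) * (W * Wᴴ) =
        ξ i j • (W * Wᴴ))
    (hFW : ∀ j : Fin r, q ≤ (j : ℕ) → F j * W = 0)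
    (Fmat : Matrix (Fin n) (Fin q × Fin n) ℂ)
    (hFmat : ∀ (a : Fin n) (p : Fin q × Fin n), Fmat a p = F (Fin.castLE hqr p.1) a p.2)
    (R : Matrix (Fin n) (Fin n) ℂ) (hRu : R ∈ Matrix.unitaryGroup (Fin n) ℂ)
    (hR : Rᴴ * Fmat * ((1 : Matrix (Fin q) (Fin q) ℂ) ⊗ₖ W) =
      (Matrix.fromRows (hξ.posSemidef.sqrt ⊗ₖ (1 : Matrix (Fin k) (Fin k) ℂ))
          (0 : Matrix (Fin (n - q * k)) (Fin q × Fin k) ℂ)).submatrix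
        (((Equiv.sumCongr finProdFinEquiv (Equiv.refl (Fin (n - q * k)))).trans
          (finSumFinEquiv.trans (finCongr (Nat.add_sub_cancel' hqk)))).symm) id)
    (t : Fin r → Fin s → ℂ)
    (Ftil : Fin s → Matrix (Fin n) (Fin n) ℂ)
    (hFtil : ∀ j, Ftil j = ∑ i, t i j • F i)
    (T : Matrix (Fin q) (Fin s) ℂ) (hT : ∀ i j, T i j = t (Fin.castLE hqr i) j)
    (ξtil : Matrix (Fin q) (Fin q) ℂ)
    (hξtil : ξtil = hξ.posSemidef.sqrt * (T * Tᴴ) * hξ.posSemidef.sqrt) :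
    ξtil.PosSemidef ∧
    ∀ ρtil : Matrix (Fin k) (Fin k) ℂ, ρtil.PosSemidef → ρtil.trace = 1 →
      Rᴴ * (∑ j, Ftil j * (W * ρtil * Wᴴ) * (Ftil j)ᴴ) * R =
        (Matrix.fromBlocks (ξtil ⊗ₖ ρtil) 0 0
            (0 : Matrix (Fin (n - q * k)) (Fin (n - q * k)) ℂ)).submatrix
          (((Equiv.sumCongr finProdFinEquiv (Equiv.refl (Fin (n - q * k)))).trans
            (finSumFinEquiv.trans (finCongr (Nat.add_sub_cancel' hqk)))).symm)
          (((Equiv.sumCongr finProdFinEquiv (Equiv.refl (Fin (n - q * k)))).trans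
            (finSumFinEquiv.trans (finCongr (Nat.add_sub_cancel' hqk)))).symm) :=
  same_recovery_for_linear_combinations_general n k r s q hqr hqk F W ξ hξ hFW Fmat hFmat R hR t
    Ftil hFtil T hT ξtil hξtil
end

section
/- Let R = E_{11} + E_{27} + E_{35} + E_{44} + E_{53} + E_{66} + E_{78} + E_{82} ∈ M_8 (a permutation matrix), W ∈ M_{8,2} the isometry with columns e_1, e_8, and Φ(ρ) = Σ_{j=0}^3 F_j ρ F_j† the 3-qubit bit-flip channel with F_0 = √p_0 I^{⊗3}, F_1 = √p_1 σ_x⊗I⊗I, F_2 = √p_2 I⊗σ_x⊗I, F_3 = √p_3 I⊗I⊗σ_x, p_j ≥ 0. Then for every ρ̃ ∈ M_2, R† Φ(W ρ̃ W†) R = diag(p_0, p_1, p_2, p_3) ⊗ ρ̃. -/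
/-!
Every matrix in sight is a column-selection matrix `(1 : Matrix n n α).submatrix id f`, whose
`x`-th column is `e_{f x}`, and such matrices compose like the functions `f`. The Kraus operator
`F j` is `√p_j` times the selection matrix of the `j`-th bit flip, `W` selects the codewords
`000, 111` and `Rᴴ` selects through the permutation read off from `R`. Hence `Rᴴ F_j W` is `√p_j`
times the selection matrix of `x ↦ (j, x)`: the recovery sends the codewords corrupted by the
`j`-th error to the `j`-th block. Conjugating `ρ̃` by these block embeddings and summing with
weights `p_j` gives `diag(p) ⊗ ρ̃`.
-/

open Matrix Kronecker

/-- `Fin 8 ≃ Fin 2 × Fin 2 × Fin 2`, sending `4b₂ + 2b₁ + b₀` to `(b₂, b₁, b₀)`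
(standard binary ordering of the 3-qubit computational basis, `|000⟩ = e₁`, `|111⟩ = e₈`). -/
def qubit3Equiv : Fin 2 × Fin 2 × Fin 2 ≃ Fin 8 :=
  (((Equiv.refl (Fin 2)).prodCongr finProdFinEquiv).trans finProdFinEquiv).trans
    (finCongr (by norm_num))

/-- `Fin 4 × Fin 2 ≃ Fin 8`, sending `(i, j)` to `2i + j` (identifying `M₈ ≅ M₄ ⊗ M₂`). -/
def fourTwoEquiv : Fin 4 × Fin 2 ≃ Fin 8 :=
  finProdFinEquiv.trans (finCongr (by norm_num))

namespace Matrix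

theorem ofReal_sqrt_smul_mul_mul_conjTranspose {m n : Type*} [Fintype n] {r : ℝ} (hr : 0 ≤ r)
    (A : Matrix m n ℂ) (B : Matrix n n ℂ) :
    ((√r : ℝ) : ℂ) • A * B * (((√r : ℝ) : ℂ) • A)ᴴ = (r : ℂ) • (A * B * Aᴴ) := by
  simp only [conjTranspose_smul, Matrix.smul_mul, Matrix.mul_smul, smul_smul]
  rw [Complex.star_def, Complex.conj_ofReal, ← Complex.ofReal_mul, Real.mul_self_sqrt hr]

variable {l m n o α : Type*} [DecidableEq m] [DecidableEq n]

theorem one_submatrix_id_mul_one_submatrix_id [Fintype n] [NonAssocSemiring α]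
    (f : n → m) (g : l → n) :
    (1 : Matrix m m α).submatrix id f * (1 : Matrix n n α).submatrix id g =
      (1 : Matrix m m α).submatrix id (f ∘ g) := by
  simpa using mul_submatrix_one (Equiv.refl n) g ((1 : Matrix m m α).submatrix id f)

theorem one_submatrix_id_kronecker_one_submatrix_id [MulZeroOneClass α]
    (f : l → m) (g : o → n) :
    (1 : Matrix m m α).submatrix id f ⊗ₖ (1 : Matrix n n α).submatrix id g =
      (1 : Matrix (m × n) (m × n) α).submatrix id (Prod.map f g) := by
  rw [kroneckerMap_submatrix_submatrix, one_kronecker_one, Prod.map_id]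

theorem submatrix_symm_one_submatrix_id [Zero α] [One α] (e : m ≃ n) (f : m → m) :
    ((1 : Matrix m m α).submatrix id f).submatrix e.symm e.symm =
      (1 : Matrix n n α).submatrix id (e ∘ f ∘ e.symm) := by
  ext a b
  simp [one_apply, Equiv.symm_apply_eq]

theorem conjTranspose_sum_single_one [Fintype m] [Semiring α] [StarRing α] (f : m → n) :
    (∑ i, single i (f i) (1 : α))ᴴ = (1 : Matrix n n α).submatrix id f := by
  ext a b
  simp [sum_apply, single_apply, one_apply, ite_and, eq_comm, apply_ite star]

theorem sum_smul_conj_one_submatrix_prodMk_eq_diagonal_kronecker {ι κ : Type*} [Fintype ι]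
    [Fintype κ] [DecidableEq ι] [DecidableEq κ] [Fintype n] [CommSemiring α] [StarRing α]
    (e : ι × κ ≃ n) (c : ι → α) (ρ : Matrix κ κ α) :
    ∑ i, c i • ((1 : Matrix n n α).submatrix id (fun x => e (i, x)) * ρ *
        ((1 : Matrix n n α).submatrix id (fun x => e (i, x)))ᴴ) =
      (diagonal c ⊗ₖ ρ).submatrix e.symm e.symm := by
  ext a b
  obtain ⟨⟨i, x⟩, rfl⟩ := e.surjective a
  obtain ⟨⟨k, y⟩, rfl⟩ := e.surjective b
  by_cases h : i = k <;>
    simp [h, sum_apply, mul_apply, one_apply, ite_and, Finset.sum_ite_eq']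

theorem pauliX_eq_one_submatrix_rev [Zero α] [One α] :
    !![0, 1; 1, 0] = (1 : Matrix (Fin 2) (Fin 2) α).submatrix id Fin.rev := by
  ext a b
  fin_cases a <;> fin_cases b <;> simp [one_apply]

end Matrix

def bitFlip : Fin 4 → Fin 2 × Fin 2 × Fin 2 → Fin 2 × Fin 2 × Fin 2 :=
  ![id, Prod.map Fin.rev id, Prod.map id (Prod.map Fin.rev id), Prod.map id (Prod.map id Fin.rev)]

def codeword : Fin 2 → Fin 8 := ![0, 7]

-- `R = ∑ i, single i (recoveryPerm i) 1`
def recoveryPerm : Fin 8 → Fin 8 := ![0, 6, 4, 3, 2, 5, 7, 1]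

theorem recovery_mul_bitFlip_mul_encoder (j : Fin 4) :
    (1 : Matrix (Fin 8) (Fin 8) ℂ).submatrix id recoveryPerm *
        (1 : Matrix (Fin 8) (Fin 8) ℂ).submatrix id
          (qubit3Equiv ∘ bitFlip j ∘ qubit3Equiv.symm) *
        (1 : Matrix (Fin 8) (Fin 8) ℂ).submatrix id codeword =
      (1 : Matrix (Fin 8) (Fin 8) ℂ).submatrix id (fun x => fourTwoEquiv (j, x)) := by
  rw [one_submatrix_id_mul_one_submatrix_id, one_submatrix_id_mul_one_submatrix_id]
  congr 1
  funext x
  revert j x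
  decide

/-- With the permutation matrix
`R = E₁₁ + E₂₇ + E₃₅ + E₄₄ + E₅₃ + E₆₆ + E₇₈ + E₈₂`, the isometry `W` with columns
`e₁, e₈`, and the 3-qubit bit-flip channel `Φ`, one has
`Rᴴ Φ(W ρ̃ Wᴴ) R = diag(p₀, p₁, p₂, p₃) ⊗ ρ̃` for every `ρ̃ ∈ M₂`. -/
theorem bitflip_recovery (p : Fin 4 → ℝ) (hp : ∀ j, 0 ≤ p j)
    (σx : Matrix (Fin 2) (Fin 2) ℂ) (hσx : σx = !![0, 1; 1, 0])
    (F : Fin 4 → Matrix (Fin 8) (Fin 8) ℂ)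
    (hF0 : F 0 = ((Real.sqrt (p 0) : ℝ) : ℂ) •
      (((1 : Matrix (Fin 2) (Fin 2) ℂ) ⊗ₖ ((1 : Matrix (Fin 2) (Fin 2) ℂ) ⊗ₖ 1)).submatrix
        qubit3Equiv.symm qubit3Equiv.symm))
    (hF1 : F 1 = ((Real.sqrt (p 1) : ℝ) : ℂ) •
      ((σx ⊗ₖ ((1 : Matrix (Fin 2) (Fin 2) ℂ) ⊗ₖ 1)).submatrix
        qubit3Equiv.symm qubit3Equiv.symm))
    (hF2 : F 2 = ((Real.sqrt (p 2) : ℝ) : ℂ) •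
      (((1 : Matrix (Fin 2) (Fin 2) ℂ) ⊗ₖ (σx ⊗ₖ 1)).submatrix
        qubit3Equiv.symm qubit3Equiv.symm))
    (hF3 : F 3 = ((Real.sqrt (p 3) : ℝ) : ℂ) •
      (((1 : Matrix (Fin 2) (Fin 2) ℂ) ⊗ₖ ((1 : Matrix (Fin 2) (Fin 2) ℂ) ⊗ₖ σx)).submatrix
        qubit3Equiv.symm qubit3Equiv.symm))
    (W : Matrix (Fin 8) (Fin 2) ℂ)
    (hW : W = Matrix.of fun a b => if (a = 0 ∧ b = 0) ∨ (a = 7 ∧ b = 1) then 1 else 0)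
    (R : Matrix (Fin 8) (Fin 8) ℂ)
    (hR : R = Matrix.single 0 0 1 + Matrix.single 1 6 1 +
      Matrix.single 2 4 1 + Matrix.single 3 3 1 +
      Matrix.single 4 2 1 + Matrix.single 5 5 1 +
      Matrix.single 6 7 1 + Matrix.single 7 1 1) :
    ∀ ρtil : Matrix (Fin 2) (Fin 2) ℂ,
      Rᴴ * (∑ j, F j * (W * ρtil * Wᴴ) * (F j)ᴴ) * R =
        ((Matrix.diagonal fun i => ((p i : ℝ) : ℂ)) ⊗ₖ ρtil).submatrix
          fourTwoEquiv.symm fourTwoEquiv.symm := by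
  intro ρ
  have hW' : W = (1 : Matrix (Fin 8) (Fin 8) ℂ).submatrix id codeword := by
    ext a b
    rw [hW, of_apply, submatrix_apply, id, one_apply]
    exact if_congr (by fin_cases b <;> simp [codeword]) rfl rfl
  have hR' : Rᴴ = (1 : Matrix (Fin 8) (Fin 8) ℂ).submatrix id recoveryPerm := by
    rw [← conjTranspose_sum_single_one, Fin.sum_univ_eight, hR]
    rfl
  have hF : ∀ j, F j = ((Real.sqrt (p j) : ℝ) : ℂ) • (1 : Matrix (Fin 8) (Fin 8) ℂ).submatrix id
      (qubit3Equiv ∘ bitFlip j ∘ qubit3Equiv.symm) := by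
    intro j
    rw [← submatrix_symm_one_submatrix_id]
    fin_cases j <;>
    · simp only [Fin.zero_eta, Fin.mk_one, Fin.reduceFinMk]
      first | rw [hF0] | rw [hF1] | rw [hF2] | rw [hF3]
      rw [← submatrix_id_id (1 : Matrix (Fin 2) (Fin 2) ℂ)]
      simp only [hσx, pauliX_eq_one_submatrix_rev, one_submatrix_id_kronecker_one_submatrix_id]
      rfl
  have hRFW : ∀ j, Rᴴ * F j * W = ((Real.sqrt (p j) : ℝ) : ℂ) •
      (1 : Matrix (Fin 8) (Fin 8) ℂ).submatrix id (fun x => fourTwoEquiv (j, x)) := by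
    intro j
    rw [hR', hF, hW', Matrix.mul_smul, Matrix.smul_mul, recovery_mul_bitFlip_mul_encoder]
  calc Rᴴ * (∑ j, F j * (W * ρ * Wᴴ) * (F j)ᴴ) * R
      = ∑ j, (Rᴴ * F j * W) * ρ * (Rᴴ * F j * W)ᴴ := by
        simp only [Finset.mul_sum, Finset.sum_mul, conjTranspose_mul,
          conjTranspose_conjTranspose, Matrix.mul_assoc]
    _ = ∑ j, ((p j : ℝ) : ℂ) • ((1 : Matrix (Fin 8) (Fin 8) ℂ).submatrix id
          (fun x => fourTwoEquiv (j, x)) * ρ *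
          ((1 : Matrix (Fin 8) (Fin 8) ℂ).submatrix id (fun x => fourTwoEquiv (j, x)))ᴴ) := by
        simp only [hRFW, ofReal_sqrt_smul_mul_mul_conjTranspose (hp _)]
    _ = _ := sum_smul_conj_one_submatrix_prodMk_eq_diagonal_kronecker fourTwoEquiv _ ρ
end
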